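/- arXiv:math/0011169 — 3 statements merged into one kernel-verified Lean document; each statement's English description precedes it below -/
import Mathlib

section
/- There is a partition of the set of finite subsets of ω₁ into countably many pieces A_i (i ∈ ω) such that for every i and all c, d ∈ A_i, the intersection c ∩ d is an initial segment of c (i.e., every element of c \ d is greater than every element of c ∩ d). -/
/-!
Fix an injection `g : ω₁ → 2^ℕ` and, for each `a < ω₁`, an injection `e a` of the countable
set `Iio a` into `ℕ`. Colour a finite set `c` by a level `k` at which the truncations
`g a ↾ k` of the elements `a ∈ c` are pairwise distinct, together with the finite set of pairs
`(g a ↾ k, e a '' {b ∈ c | b < a})` for `a ∈ c`; there are only countably many colours. If `c`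
and `d` have the same colour and `x ∈ c ∩ d`, the pair of `x` in `c` is the pair of some
`x' ∈ d` with the same truncation, so `x' = x`, and injectivity of `e x` then gives
`{b ∈ c | b < x} = {b ∈ d | b < x}`.
-/

/-- The first uncountable ordinal `ω₁`, as the linear order of countable ordinals. -/
abbrev Omega1 : Type 1 := {o : Ordinal // o < (Cardinal.aleph 1).ord}

open Cardinal Set Function Filter

theorem eventually_injOn_truncation {α β : Type*} {g : α → ℕ → β} (hg : Injective g)
    (s : Finset α) : ∀ᶠ k in atTop, InjOn (fun a => (List.range k).map (g a)) s := by
  have hpair : ∀ a ∈ s, ∀ b ∈ s, ∀ᶠ k in atTop,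
      (List.range k).map (g a) = (List.range k).map (g b) → a = b := by
    intro a _ b _
    by_cases hab : a = b
    · exact Eventually.of_forall fun _ _ => hab
    obtain ⟨m, hm⟩ := ne_iff.mp (hg.ne hab)
    filter_upwards [eventually_gt_atTop m] with k hk heq
    exact absurd (List.map_inj_left.mp heq m (List.mem_range.mpr hk)) hm
  filter_upwards [(eventually_all_finset s).2 fun a ha => (eventually_all_finset s).2 (hpair a ha)]
    with k hk a ha b hb using hk a ha b hb

section LinearOrder

variable {α β γ : Type*} [LinearOrder α]

theorem Finset.filter_lt_eq_of_image_eq [DecidableEq γ] {c d : Finset α} {x : α} {e : α → γ}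
    (he : InjOn e (Set.Iio x))
    (h : (c.filter (· < x)).image e = (d.filter (· < x)).image e) :
    c.filter (· < x) = d.filter (· < x) := by
  rw [← Finset.coe_inj] at h ⊢
  rw [Finset.coe_image, Finset.coe_image] at h
  exact (he.image_eq_image_iff (fun _ hb => (Finset.mem_filter.mp hb).2)
    (fun _ hb => (Finset.mem_filter.mp hb).2)).mp h

theorem Finset.lt_of_filter_lt_eq {c d : Finset α} {x y : α}
    (h : c.filter (· < x) = d.filter (· < x)) (hxd : x ∈ d) (hyc : y ∈ c) (hyd : y ∉ d) :
    x < y := by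
  by_contra! hyx
  rcases hyx.lt_or_eq with hyx | rfl
  · exact hyd (Finset.mem_filter.mp (h ▸ Finset.mem_filter.mpr ⟨hyc, hyx⟩)).1
  · exact hyd hxd

def Finset.truncationTrace [DecidableEq β] (e : α → α → ℕ) (g : α → ℕ → β) (k : ℕ) (c : Finset α) :
    Finset (List β × Finset ℕ) :=
  c.image fun a => ((List.range k).map (g a), (c.filter (· < a)).image (e a))

theorem Finset.filter_lt_eq_of_truncationTrace_eq [DecidableEq β] {e : α → α → ℕ} {g : α → ℕ → β} {k : ℕ}
    {c d : Finset α} {x : α} (he : InjOn (e x) (Set.Iio x))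
    (hk : InjOn (fun a => (List.range k).map (g a)) d)
    (h : c.truncationTrace e g k = d.truncationTrace e g k) (hxc : x ∈ c) (hxd : x ∈ d) :
    c.filter (· < x) = d.filter (· < x) := by
  have hx : ((List.range k).map (g x), (c.filter (· < x)).image (e x)) ∈
      d.truncationTrace e g k := h ▸ Finset.mem_image_of_mem _ hxc
  obtain ⟨x', hx'd, hx'⟩ := Finset.mem_image.mp hx
  obtain ⟨htrunc, hbelow⟩ := Prod.mk.inj hx'
  obtain rfl : x' = x := hk hx'd hxd htrunc
  exact (Finset.filter_lt_eq_of_image_eq he hbelow).symm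

theorem exists_nat_coloring_inter_isInitialSegment [Countable β]
    (hIio : ∀ a : α, (Iio a).Countable) {g : α → ℕ → β} (hg : Injective g) :
    ∃ F : Finset α → ℕ, ∀ c d : Finset α, F c = F d →
      ∀ x ∈ c ∩ d, ∀ y ∈ c, y ∉ d → x < y := by
  classical
  choose e he using fun a => countable_iff_exists_injOn.mp (hIio a)
  choose k hk using fun s : Finset α => (eventually_injOn_truncation hg s).exists
  obtain ⟨ι, hι⟩ := Countable.exists_injective_nat (ℕ × Finset (List β × Finset ℕ))
  refine ⟨fun c => ι (k c, c.truncationTrace e g (k c)), fun c d hcd x hx y hyc hyd => ?_⟩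
  obtain ⟨hxc, hxd⟩ := Finset.mem_inter.mp hx
  obtain ⟨hkcd, htrace⟩ := Prod.mk.inj (hι hcd)
  rw [hkcd] at htrace
  exact Finset.lt_of_filter_lt_eq
    (Finset.filter_lt_eq_of_truncationTrace_eq (he x) (hk d) htrace hxc hxd) hxd hyc hyd

end LinearOrder

theorem Ordinal.countable_Iio_of_lt_ord_aleph_one {o : Ordinal} (ho : o < (aleph 1).ord) :
    (Iio o).Countable := by
  rw [← le_aleph0_iff_set_countable, Cardinal.mk_Iio_ordinal, lift_le_aleph0, ← lt_aleph_one_iff]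
  exact lt_ord.mp ho

theorem Omega1.countable_Iio (y : Omega1) : (Iio y).Countable :=
  (Ordinal.countable_Iio_of_lt_ord_aleph_one y.2).preimage Subtype.val_injective

theorem Omega1.mk_eq : #Omega1 = lift.{1, 0} ℵ₁ := by
  have := Cardinal.mk_Iio_ordinal.{0} (aleph 1).ord
  rwa [card_ord] at this

theorem Omega1.exists_injective_nat_bool : ∃ g : Omega1 → ℕ → Bool, Injective g := by
  have h : lift.{0} #Omega1 ≤ lift.{1} #(ℕ → Bool) := by
    rw [Omega1.mk_eq, lift_lift, Cardinal.lift_le, ← power_def, mk_bool, mk_nat, two_power_aleph0]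
    exact aleph_one_le_continuum
  exact ⟨_, (lift_mk_le'.mp h).some.injective⟩

/-- There is a partition of the finite subsets of `ω₁` into countably many pieces
such that any two sets in the same piece intersect in an initial segment of each:
every element of `c \ d` is greater than every element of `c ∩ d`. -/
theorem stmt_4 : ∃ F : Finset Omega1 → ℕ,
    ∀ c d : Finset Omega1, F c = F d →
      ∀ x ∈ c ∩ d, ∀ y ∈ c, y ∉ d → x < y := by
  obtain ⟨g, hg⟩ := Omega1.exists_injective_nat_bool
  exact exists_nat_coloring_inter_isInitialSegment Omega1.countable_Iio hg
end

section
/- Fix ℓ ∈ ω. For each β < ω₁ fix an injection g_β : β → ω, let f_n(β) = g_β⁻¹(n) (a partial function), and let h_n(β) be the least m such that the m-fold iterate f_n^{(m)}(β) is undefined. Define two ℓ-element subsets {α₀ < ⋯ < α_{ℓ-1}} and {β₀ < ⋯ < β_{ℓ-1}} of ω₁ to be equivalent iff for all i < j < ℓ there is n ∈ ω with n = g_{α_j}(α_i) = g_{β_j}(β_i) and h_n(α_j) = h_n(β_j). Then if c and d are equivalent ℓ-element sets, c ∩ d is an initial segment of both c and d. -/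
private lemma hsucc (f : ℕ → Omega1 → Option Omega1)
    (h : ℕ → Omega1 → ℕ)
    (hh : ∀ n β, (fun s => Option.bind s (f n))^[h n β] (some β) = none ∧
        ∀ k < h n β, (fun s => Option.bind s (f n))^[k] (some β) ≠ none)
    (n : ℕ) (β γ : Omega1) (hfn : f n β = some γ) : h n β = h n γ + 1 := by
  set F := fun s => Option.bind s (f n) with hF
  have hstep : F (some β) = some γ := by simp [hF, hfn]
  obtain ⟨h1, h2⟩ := hh n β
  obtain ⟨g1, g2⟩ := hh n γ
  have hne : h n β ≠ 0 := by
    intro h0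
    rw [h0] at h1
    simp at h1
  obtain ⟨m, hm⟩ := Nat.exists_eq_succ_of_ne_zero hne
  have key : ∀ k, F^[k+1] (some β) = F^[k] (some γ) := by
    intro k
    rw [Function.iterate_succ_apply, hstep]
  have le1 : h n γ ≤ m := by
    by_contra hcon
    push_neg at hcon
    exact g2 m hcon (by have := h1; rw [hm] at this; rw [← key]; exact this)
  have le2 : m ≤ h n γ := by
    by_contra hcon
    push_neg at hcon
    exact h2 (h n γ + 1) (by omega) (by rw [key]; exact g1)
  omega

private lemma one_side (ℓ : ℕ)
    (g : ∀ β : Omega1, {o : Omega1 // o < β} → ℕ)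
    (f : ℕ → Omega1 → Option Omega1)
    (hf : ∀ n β γ, f n β = some γ ↔ ∃ h : γ < β, g β ⟨γ, h⟩ = n)
    (h : ℕ → Omega1 → ℕ)
    (hh : ∀ n β, (fun s => Option.bind s (f n))^[h n β] (some β) = none ∧
        ∀ k < h n β, (fun s => Option.bind s (f n))^[k] (some β) ≠ none)
    (α β : Fin ℓ → Omega1) (hα : StrictMono α)
    (heq : ∀ i j : Fin ℓ, i < j → ∃ n : ℕ,
      (∃ hij : α i < α j, g (α j) ⟨α i, hij⟩ = n) ∧
      (∃ hij : β i < β j, g (β j) ⟨β i, hij⟩ = n) ∧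
      h n (α j) = h n (β j)) :
    ∀ x y : Omega1, x ∈ Set.range α → x ∈ Set.range β →
      y ∈ Set.range α → y ∉ Set.range β → x < y := by
  have claim1 : ∀ i j, α i = β j → i = j := by
    intro i j hij
    rcases lt_trichotomy i j with hlt | he | hgt
    · obtain ⟨n, ⟨h1, hg1⟩, ⟨h2, hg2⟩, hn⟩ := heq i j hlt
      have fa : f n (α j) = some (α i) := (hf n (α j) (α i)).2 ⟨h1, hg1⟩
      rw [hij] at fa
      have := hsucc f h hh n (α j) (β j) fa
      omega
    · exact he
    · obtain ⟨n, ⟨h1, hg1⟩, ⟨h2, hg2⟩, hn⟩ := heq j i hgt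
      have fb : f n (β i) = some (β j) := (hf n (β i) (β j)).2 ⟨h2, hg2⟩
      rw [← hij] at fb
      have := hsucc f h hh n (β i) (α i) fb
      omega
  have claim2 : ∀ i j, i < j → α j = β j → α i = β i := by
    intro i j hlt hj
    obtain ⟨n, ⟨h1, hg1⟩, ⟨h2, hg2⟩, hn⟩ := heq i j hlt
    have fa : f n (α j) = some (α i) := (hf n (α j) (α i)).2 ⟨h1, hg1⟩
    have fb : f n (β j) = some (β i) := (hf n (β j) (β i)).2 ⟨h2, hg2⟩
    rw [hj, fb] at fa
    exact Option.some_injective _ fa.symm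
  rintro x y ⟨i, rfl⟩ ⟨j, hj⟩ ⟨k, rfl⟩ hy
  have hij : i = j := claim1 i j hj.symm
  subst hij
  rcases lt_trichotomy i k with hlt | he | hgt
  · exact hα hlt
  · exact absurd ⟨i, he ▸ hj⟩ hy
  · exact absurd ⟨k, (claim2 k i hgt hj.symm).symm⟩ hy

/-- If two `ℓ`-element subsets of `ω₁` (enumerated increasingly by `α`, `β`) are
equivalent in the sense that for all `i < j` some `n` satisfies
`n = g_{α_j}(α_i) = g_{β_j}(β_i)` and `h_n(α_j) = h_n(β_j)`, then their
intersection is an initial segment of both. -/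
theorem stmt_6 (ℓ : ℕ)
    (g : ∀ β : Omega1, {o : Omega1 // o < β} → ℕ)
    (hg : ∀ β, Function.Injective (g β))
    (f : ℕ → Omega1 → Option Omega1)
    (hf : ∀ n β γ, f n β = some γ ↔ ∃ h : γ < β, g β ⟨γ, h⟩ = n)
    (h : ℕ → Omega1 → ℕ)
    (hh : ∀ n β, (fun s => Option.bind s (f n))^[h n β] (some β) = none ∧
        ∀ k < h n β, (fun s => Option.bind s (f n))^[k] (some β) ≠ none)
    (α β : Fin ℓ → Omega1) (hα : StrictMono α) (hβ : StrictMono β)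
    (heq : ∀ i j : Fin ℓ, i < j → ∃ n : ℕ,
      (∃ hij : α i < α j, g (α j) ⟨α i, hij⟩ = n) ∧
      (∃ hij : β i < β j, g (β j) ⟨β i, hij⟩ = n) ∧
      h n (α j) = h n (β j)) :
    (∀ x y : Omega1, x ∈ Set.range α → x ∈ Set.range β →
      y ∈ Set.range α → y ∉ Set.range β → x < y) ∧
    (∀ x y : Omega1, x ∈ Set.range α → x ∈ Set.range β →
      y ∈ Set.range β → y ∉ Set.range α → x < y) := by
  refine ⟨one_side ℓ g f hf h hh α β hα heq, ?_⟩
  intro x y hxα hxβ hyβ hyα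
  exact one_side ℓ g f hf h hh β α hβ
    (fun i j hij => by
      obtain ⟨n, ha, hb, hab⟩ := heq i j hij
      exact ⟨n, hb, ha, hab.symm⟩) x y hxβ hxα hyβ hyα
end

section
/- In the theory T of countably many binary splitting cross-cutting equivalence relations, if M and N are models of T and for some a ∈ M, b ∈ N every complete 2-type p ∈ S₂(∅) satisfies |p(M,a)| = |p(N,b)|, then there is an isomorphism g : M → N with g(a) = b. -/
/-- A model of the theory `T` of countably many binary splitting, cross-cutting
equivalence relations. -/
def IsCCModel (M : Type) (E : ℕ → M → M → Prop) : Prop :=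
  (∀ n, Equivalence (E n)) ∧
  (∀ n, ∃ a b : M, ¬ E n a b ∧ (∀ x, E n x a ∨ E n x b) ∧
    {x | E n x a}.Infinite ∧ {x | E n x b}.Infinite) ∧
  (∀ (n : ℕ) (w : Set ℕ) (x : M), ∃ y : M, ∀ i < n, (E i x y ↔ i ∈ w))

/-- In a model with two classes per relation, relatedness is determined by
agreement of types over any parameter. -/
lemma IsCCModel.two_class {M : Type} {E : ℕ → M → M → Prop} (hM : IsCCModel M E)
    (a : M) (n : ℕ) (x y : M) : E n x y ↔ (E n x a ↔ E n y a) := by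
  have h := hM.1 n
  constructor
  · intro hxy
    exact ⟨fun hx => h.trans (h.symm hxy) hx, fun hy => h.trans hxy hy⟩
  · intro hiff
    by_cases hx : E n x a
    · exact h.trans hx (h.symm (hiff.mp hx))
    · have hy : ¬ E n y a := fun hy => hx (hiff.mpr hy)
      obtain ⟨a', b', _, hall, _, _⟩ := hM.2.1 n
      rcases hall x with hxa | hxb <;> rcases hall y with hya | hyb
      · exact h.trans hxa (h.symm hya)
      · rcases hall a with haa | hab'
        · exact absurd (h.trans hxa (h.symm haa)) hx
        · exact absurd (h.trans hyb (h.symm hab')) hy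
      · rcases hall a with haa | hab'
        · exact absurd (h.trans hya (h.symm haa)) hy
        · exact absurd (h.trans hxb (h.symm hab')) hx
      · exact h.trans hxb (h.symm hyb)

/-- If `M`, `N` are models of the cross-cutting theory, `a ∈ M`, `b ∈ N`, and
every complete 2-type over `∅` (given by the set `S = {n : E n x y}`) has fibers
over `a` and `b` of equal cardinality, then there is an isomorphism `g : M → N`
with `g a = b`. -/
theorem stmt_18 (M N : Type) (E : ℕ → M → M → Prop) (F : ℕ → N → N → Prop)
    (hM : IsCCModel M E) (hN : IsCCModel N F) (a : M) (b : N)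
    (hcard : ∀ S : Set ℕ,
      Cardinal.mk {c : M // ∀ n, E n c a ↔ n ∈ S}
        = Cardinal.mk {c : N // ∀ n, F n c b ↔ n ∈ S}) :
    ∃ g : M ≃ N, g a = b ∧ ∀ (n : ℕ) (x y : M), E n x y ↔ F n (g x) (g y) := by
  classical
  set tM : M → Set ℕ := fun c => {n | E n c a} with htMdef
  set tN : N → Set ℕ := fun c => {n | F n c b} with htNdef
  have eq1 : ∀ S : Set ℕ, Nonempty ({c : M // tM c = S} ≃ {c : N // tN c = S}) := by
    intro S
    obtain ⟨f⟩ := Cardinal.eq.mp (hcard S)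
    have eA : {c : M // tM c = S} ≃ {c : M // ∀ n, E n c a ↔ n ∈ S} :=
      Equiv.subtypeEquivRight (fun c => by
        simp only [htMdef, Set.ext_iff, Set.mem_setOf_eq])
    have eB : {c : N // tN c = S} ≃ {c : N // ∀ n, F n c b ↔ n ∈ S} :=
      Equiv.subtypeEquivRight (fun c => by
        simp only [htNdef, Set.ext_iff, Set.mem_setOf_eq])
    exact ⟨eA.trans (f.trans eB.symm)⟩
  have e : ∀ S : Set ℕ, {c : M // tM c = S} ≃ {c : N // tN c = S} :=
    fun S => (eq1 S).some
  let g0 : M ≃ N :=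
    (Equiv.sigmaFiberEquiv tM).symm.trans
      ((Equiv.sigmaCongrRight e).trans (Equiv.sigmaFiberEquiv tN))
  have hg0 : ∀ x : M, tN (g0 x) = tM x := fun x => (e (tM x) ⟨x, rfl⟩).2
  have hta : tM a = Set.univ := by
    ext n; simp [htMdef, (hM.1 n).refl a]
  have htb : tN b = Set.univ := by
    ext n; simp [htNdef, (hN.1 n).refl b]
  have hswap : ∀ z : N, tN (Equiv.swap (g0 a) b z) = tN z := by
    intro z
    rw [Equiv.swap_apply_def]
    split_ifs with h1 h2
    · rw [htb, h1, hg0, hta]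
    · rw [hg0, hta, h2, htb]
    · rfl
  refine ⟨g0.trans (Equiv.swap (g0 a) b), ?_, ?_⟩
  · simp [Equiv.swap_apply_left]
  · intro n x y
    have key : ∀ z : M, F n (g0.trans (Equiv.swap (g0 a) b) z) b ↔ E n z a := by
      intro z
      have h : tN (Equiv.swap (g0 a) b (g0 z)) = tM z := (hswap (g0 z)).trans (hg0 z)
      simpa [htMdef, htNdef] using Set.ext_iff.mp h n
    rw [hM.two_class a n x y,
      hN.two_class b n (g0.trans (Equiv.swap (g0 a) b) x) (g0.trans (Equiv.swap (g0 a) b) y),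
      key x, key y]
end
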